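/- arXiv:2208.00290 — 3 statements merged into one kernel-verified Lean document; each statement's English description precedes it below -/
import Mathlib

section
/- Let d ≥ 1 and let u be a random vector in ℝ^d distributed with the unit-scale truncated Cauchy density h. Then for every positive integer r, E_u[‖u‖^{2r}] ≤ c₁₁/(r + d), where c₁₁ = 2Γ((d+1)/2)/(√π · Γ(d/2) · c₁). -/
open MeasureTheory Real Filter Topology ProbabilityTheory

/-- The truncated (to the `δ`-sphere) Cauchy density on `ℝ^d`, with normalizing
constant `c₁`: `h_δ(u) = Γ((d+1)/2)/(π^((d+1)/2) c₁ δ^d) · (1+‖u‖²/δ²)^(-(d+1)/2)`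
for `‖u‖ ≤ δ` and `0` otherwise. -/
noncomputable def truncCauchy (d : ℕ) (c₁ δ : ℝ) (u : EuclideanSpace ℝ (Fin d)) : ℝ :=
  if ‖u‖ ≤ δ then
    Real.Gamma (((d : ℝ) + 1) / 2) / (Real.pi ^ (((d : ℝ) + 1) / 2) * c₁ * δ ^ d) *
      (1 + ‖u‖ ^ 2 / δ ^ 2) ^ (-(((d : ℝ) + 1) / 2))
  else 0

/-- The unit-scale truncated Cauchy probability measure on `ℝ^d`. -/
noncomputable def truncCauchyMeasure (d : ℕ) (c₁ : ℝ) : Measure (EuclideanSpace ℝ (Fin d)) :=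
  volume.withDensity fun v => ENNReal.ofReal (truncCauchy d c₁ 1 v)

/-! On the unit ball the density `h` is at most its value at the origin,
`Γ((d+1)/2) / (π^((d+1)/2) c₁)`. In polar coordinates `∫_{‖u‖ ≤ 1} ‖u‖^(2r) = d |B| / (2r + d)`,
and `d |B| = 2 π^(d/2) / Γ(d/2)` is the area of the unit sphere. Multiplying out gives
`E_u[‖u‖^(2r)] ≤ c₁₁ / (2r + d) ≤ c₁₁ / (r + d)`. -/

open Metric Set Module

namespace MeasureTheory

variable {E : Type*} [NormedAddCommGroup E] [NormedSpace ℝ E] [FiniteDimensional ℝ E]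
  [MeasurableSpace E] [BorelSpace E] [Nontrivial E] (μ : Measure E) [μ.IsAddHaarMeasure]

theorem setIntegral_closedBall_norm_pow (k : ℕ) :
    ∫ x in closedBall (0 : E) 1, ‖x‖ ^ k ∂μ
      = finrank ℝ E * μ.real (ball 0 1) / (k + finrank ℝ E) := by
  have hn : 0 < finrank ℝ E := finrank_pos
  have radial : ∫ x in closedBall (0 : E) 1, ‖x‖ ^ k ∂μ
      = ∫ x, (Iic (1 : ℝ)).indicator (· ^ k) ‖x‖ ∂μ := by
    rw [← integral_indicator measurableSet_closedBall]
    congr with x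
    simp [indicator]
  have polar : ∫ y in Ioi (0 : ℝ), y ^ (finrank ℝ E - 1) • (Iic (1 : ℝ)).indicator (· ^ k) y
      = ∫ y in (0 : ℝ)..1, y ^ (k + finrank ℝ E - 1) := by
    rw [intervalIntegral.integral_of_le zero_le_one, ← Ioi_inter_Iic,
      ← setIntegral_indicator measurableSet_Iic]
    refine setIntegral_congr_fun measurableSet_Ioi fun y _ => ?_
    by_cases hy : y ≤ 1
    · simp only [indicator_of_mem (mem_Iic.2 hy), smul_eq_mul, ← pow_add]
      congr 1
      omega
    · simp [hy]
  have hexp : ((k + finrank ℝ E - 1 : ℕ) : ℝ) + 1 = k + finrank ℝ E := by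
    rw [Nat.cast_sub (by omega)]
    push_cast
    ring
  rw [radial, integral_fun_norm_addHaar, polar, integral_pow, hexp, one_pow,
    zero_pow (Nat.succ_ne_zero _), sub_zero, nsmul_eq_mul, smul_eq_mul]
  ring

end MeasureTheory

theorem EuclideanSpace.card_mul_volume_real_ball_one (ι : Type*) [Fintype ι] [Nonempty ι] :
    Fintype.card ι * volume.real (ball (0 : EuclideanSpace ℝ ι) 1)
      = 2 * √π ^ Fintype.card ι / Real.Gamma (Fintype.card ι / 2) := by
  have hd : (0 : ℝ) < Fintype.card ι / 2 := by positivity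
  rw [measureReal_def, EuclideanSpace.volume_ball, ENNReal.ofReal_one, one_pow, one_mul,
    ENNReal.toReal_ofReal (by positivity), Real.Gamma_add_one hd.ne']
  field_simp

noncomputable def truncCauchyPeak (d : ℕ) (c₁ δ : ℝ) : ℝ :=
  Real.Gamma (((d : ℝ) + 1) / 2) / (Real.pi ^ (((d : ℝ) + 1) / 2) * c₁ * δ ^ d)

section truncCauchy

variable {d : ℕ} {c₁ δ : ℝ}

theorem truncCauchyPeak_nonneg (hc₁ : 0 ≤ c₁) (hδ : 0 ≤ δ) : 0 ≤ truncCauchyPeak d c₁ δ := by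
  have := Real.Gamma_nonneg_of_nonneg (s := ((d : ℝ) + 1) / 2) (by positivity)
  unfold truncCauchyPeak
  positivity

theorem truncCauchy_nonneg (hc₁ : 0 ≤ c₁) (hδ : 0 ≤ δ) (u : EuclideanSpace ℝ (Fin d)) :
    0 ≤ truncCauchy d c₁ δ u := by
  unfold truncCauchy
  split_ifs
  · exact mul_nonneg (truncCauchyPeak_nonneg hc₁ hδ) (Real.rpow_nonneg (by positivity) _)
  · rfl

theorem truncCauchy_le_indicator (hc₁ : 0 ≤ c₁) (hδ : 0 ≤ δ) (u : EuclideanSpace ℝ (Fin d)) :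
    truncCauchy d c₁ δ u ≤ (closedBall 0 δ).indicator (fun _ => truncCauchyPeak d c₁ δ) u := by
  unfold truncCauchy
  split_ifs with hu
  · rw [indicator_of_mem (mem_closedBall_zero_iff.2 hu)]
    refine mul_le_of_le_one_right (truncCauchyPeak_nonneg hc₁ hδ)
      (Real.rpow_le_one_of_one_le_of_nonpos ?_ ?_)
    · have : 0 ≤ ‖u‖ ^ 2 / δ ^ 2 := by positivity
      linarith
    · have : (0 : ℝ) ≤ d := d.cast_nonneg
      linarith
  · rw [indicator_of_notMem (by simpa using hu)]

theorem integral_truncCauchy_mul_le (hc₁ : 0 ≤ c₁) (hδ : 0 ≤ δ)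
    {g : EuclideanSpace ℝ (Fin d) → ℝ} (hg_nonneg : ∀ u, 0 ≤ g u)
    (hg : IntegrableOn g (closedBall 0 δ)) :
    ∫ u, truncCauchy d c₁ δ u * g u ≤ truncCauchyPeak d c₁ δ * ∫ u in closedBall 0 δ, g u := by
  rw [← integral_const_mul, ← integral_indicator measurableSet_closedBall]
  refine integral_mono_of_nonneg (.of_forall fun u => ?_) (IntegrableOn.integrable_indicator
    (hg.const_mul _) measurableSet_closedBall) (.of_forall fun u => ?_)
  · exact mul_nonneg (truncCauchy_nonneg hc₁ hδ u) (hg_nonneg u)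
  · rw [indicator_mul_left]
    exact mul_le_mul_of_nonneg_right (truncCauchy_le_indicator hc₁ hδ u) (hg_nonneg u)

end truncCauchy

theorem truncCauchyPeak_one_mul_card_mul_volume_real_ball {d : ℕ} (hd : 0 < d) (c₁ : ℝ) :
    truncCauchyPeak d c₁ 1 * (d * volume.real (ball (0 : EuclideanSpace ℝ (Fin d)) 1))
      = 2 * Real.Gamma (((d : ℝ) + 1) / 2) / (√π * Real.Gamma ((d : ℝ) / 2) * c₁) := by
  have : Nonempty (Fin d) := ⟨⟨0, hd⟩⟩
  have hsphere := EuclideanSpace.card_mul_volume_real_ball_one (Fin d)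
  rw [Fintype.card_fin] at hsphere
  rw [hsphere, truncCauchyPeak, Real.rpow_div_two_eq_sqrt _ pi_pos.le, ← Nat.cast_succ,
    Real.rpow_natCast, pow_succ, one_pow, mul_one]
  have : 0 < Real.Gamma ((d : ℝ) / 2) := Real.Gamma_pos_of_pos (by positivity)
  have : 0 < √π := Real.sqrt_pos.2 pi_pos
  field_simp

theorem truncCauchy_moment_bound_general
    (d : ℕ) (hd : 0 < d) (c₁ : ℝ) (hc₁ : 0 < c₁)
    (c₁₁ : ℝ)
    (hc₁₁ : c₁₁ = 2 * Real.Gamma (((d : ℝ) + 1) / 2) /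
      (Real.sqrt Real.pi * Real.Gamma ((d : ℝ) / 2) * c₁))
    (r : ℕ) :
    (∫ u : EuclideanSpace ℝ (Fin d), truncCauchy d c₁ 1 u * ‖u‖ ^ (2 * r))
      ≤ c₁₁ / ((r : ℝ) + (d : ℝ)) := by
  have : Nonempty (Fin d) := ⟨⟨0, hd⟩⟩
  have hc₁₁_nonneg : 0 ≤ c₁₁ := by
    have := Real.Gamma_pos_of_pos (s := (d : ℝ) / 2) (by positivity)
    have := Real.Gamma_pos_of_pos (s := ((d : ℝ) + 1) / 2) (by positivity)
    rw [hc₁₁]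
    positivity
  have hmoment := setIntegral_closedBall_norm_pow
    (volume : Measure (EuclideanSpace ℝ (Fin d))) (2 * r)
  rw [finrank_euclideanSpace_fin] at hmoment
  calc ∫ u, truncCauchy d c₁ 1 u * ‖u‖ ^ (2 * r)
      ≤ truncCauchyPeak d c₁ 1 * ∫ u in closedBall 0 1, ‖u‖ ^ (2 * r) :=
        integral_truncCauchy_mul_le hc₁.le zero_le_one (fun u => by positivity)
          ((continuous_norm.pow _).locallyIntegrable.integrableOn_isCompact
            (isCompact_closedBall 0 1))
    _ = c₁₁ / (2 * r + d) := by
        rw [hmoment, hc₁₁, ← truncCauchyPeak_one_mul_card_mul_volume_real_ball hd]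
        push_cast
        ring
    _ ≤ c₁₁ / (r + d) := by
        gcongr
        linarith

/-- Moment bound for the unit-scale truncated Cauchy distribution:
`E[‖u‖^(2r)] ≤ c₁₁/(r+d)` with `c₁₁ = 2Γ((d+1)/2)/(√π·Γ(d/2)·c₁)`. -/
theorem truncCauchy_moment_bound
    (d : ℕ) (hd : 0 < d) (c₁ : ℝ) (hc₁ : 0 < c₁)
    (hnorm : ∫ u : EuclideanSpace ℝ (Fin d), truncCauchy d c₁ 1 u = 1)
    (c₁₁ : ℝ)
    (hc₁₁ : c₁₁ = 2 * Real.Gamma (((d : ℝ) + 1) / 2) /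
      (Real.sqrt Real.pi * Real.Gamma ((d : ℝ) / 2) * c₁))
    (r : ℕ) (hr : 1 ≤ r) :
    (∫ u : EuclideanSpace ℝ (Fin d), truncCauchy d c₁ 1 u * ‖u‖ ^ (2 * r))
      ≤ c₁₁ / ((r : ℝ) + (d : ℝ)) :=
  truncCauchy_moment_bound_general d hd c₁ hc₁ c₁₁ hc₁₁ r
end

section
/- Let f : ℝ^d → ℝ be continuously differentiable with L-Lipschitz gradient and bounded below, and let x : [0,∞) → ℝ^d be a solution of the gradient flow ẋ(t) = −∇f(x(t)) whose trajectory {x(t) : t ≥ 0} is bounded. Then t ↦ f(x(t)) is nonincreasing with (d/dt) f(x(t)) = −‖∇f(x(t))‖² for all t, ∇f(x(t)) → 0 as t → ∞, and the distance from x(t) to the set H = {x ∈ ℝ^d : ∇f(x) = 0} tends to 0 as t → ∞. -/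
/-!
Along the flow `(f ∘ x)' = -‖∇f(x)‖²`, so `f ∘ x` decreases to a finite limit. On the bounded
trajectory the Lipschitz gradient is bounded, hence `x` is Lipschitz and `‖∇f(x(t))‖²` is
uniformly continuous in `t`; Barbalat's lemma then forces it to `0`. For the distance to the
critical set, `‖∇f‖` is bounded away from `0` on the compact part of a closed ball that lies at
distance at least `ε` from that set.
-/

open Filter Topology Set Metric NNReal

theorem AntitoneOn.exists_tendsto_atTop_of_forall_le {α : Type*} [LinearOrder α] {φ : α → ℝ}
    {a : α} {m : ℝ} (hφ : AntitoneOn φ (Ici a)) (hm : ∀ t ∈ Ici a, m ≤ φ t) :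
    ∃ l, Tendsto φ atTop (𝓝 l) := by
  have hanti : Antitone fun t => φ (max a t) := fun s t hst =>
    hφ (le_max_left a s) (le_max_left a t) (max_le_max le_rfl hst)
  have hbdd : BddBelow (range fun t => φ (max a t)) :=
    ⟨m, forall_mem_range.2 fun t => hm _ (le_max_left a t)⟩
  refine ⟨_, (tendsto_atTop_ciInf hanti hbdd).congr' ?_⟩
  filter_upwards [eventually_ge_atTop a] with t ht
  rw [max_eq_right ht]

/-- **Barbalat's lemma.** By the mean value theorem, `φ' t` is within `ε / 2` of the slope of `φ`
over `[t, t + δ]`, and these slopes tend to `0`. -/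
theorem tendsto_zero_of_hasDerivAt_of_uniformContinuousOn {φ φ' : ℝ → ℝ} {a l : ℝ}
    (hφ : ∀ t ∈ Ici a, HasDerivAt φ (φ' t) t) (hlim : Tendsto φ atTop (𝓝 l))
    (huc : UniformContinuousOn φ' (Ici a)) : Tendsto φ' atTop (𝓝 0) := by
  rw [Metric.tendsto_nhds]
  intro ε hε
  obtain ⟨δ, hδ, hφ'δ⟩ := Metric.uniformContinuousOn_iff.1 huc (ε / 2) (half_pos hε)
  have hslope : Tendsto (fun t => (φ (t + δ) - φ t) / δ) atTop (𝓝 0) := by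
    simpa using ((hlim.comp (tendsto_atTop_add_const_right _ δ tendsto_id)).sub hlim).div_const δ
  filter_upwards [Metric.tendsto_nhds.1 hslope _ (half_pos hε), eventually_ge_atTop a]
    with t hslope_t hat
  have hIcc : Icc t (t + δ) ⊆ Ici a := fun s hs => le_trans hat hs.1
  obtain ⟨c, hc, hφ'c⟩ := exists_hasDerivAt_eq_slope φ φ' (lt_add_of_pos_right t hδ)
    (fun s hs => (hφ s (hIcc hs)).continuousAt.continuousWithinAt)
    (fun s hs => hφ s (hIcc (Ioo_subset_Icc_self hs)))
  have hct : dist t c < δ := by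
    rw [dist_comm, Real.dist_eq, abs_of_pos (sub_pos.2 hc.1)]
    linarith [hc.2]
  have hφ'tc := hφ'δ t hat c (hIcc (Ioo_subset_Icc_self hc)) hct
  rw [add_sub_cancel_left] at hφ'c
  rw [← hφ'c] at hslope_t
  calc dist (φ' t) 0 ≤ dist (φ' t) (φ' c) + dist (φ' c) 0 := dist_triangle _ _ _
    _ < ε / 2 + ε / 2 := add_lt_add hφ'tc hslope_t
    _ = ε := add_halves ε

theorem LipschitzOnWith.norm_sq {α E : Type*} [PseudoMetricSpace α] [SeminormedAddCommGroup E]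
    {u : α → E} {s : Set α} {K M : ℝ≥0} (hu : LipschitzOnWith K u s) (hM : ∀ a ∈ s, ‖u a‖ ≤ M) :
    LipschitzOnWith (2 * M * K) (fun a => ‖u a‖ ^ 2) s := by
  refine LipschitzOnWith.of_dist_le_mul fun a ha b hb => ?_
  have hsum : ‖u a‖ + ‖u b‖ ≤ 2 * M := by linarith [hM a ha, hM b hb]
  calc dist (‖u a‖ ^ 2) (‖u b‖ ^ 2) = |‖u a‖ - ‖u b‖| * (‖u a‖ + ‖u b‖) := by
        rw [Real.dist_eq, ← abs_of_nonneg (by positivity : 0 ≤ ‖u a‖ + ‖u b‖), ← abs_mul]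
        ring_nf
    _ ≤ (K * dist a b) * (2 * M) := by
        gcongr
        calc |‖u a‖ - ‖u b‖| ≤ dist (u a) (u b) :=
              dist_eq_norm (u a) (u b) ▸ abs_norm_sub_norm_le _ _
          _ ≤ K * dist a b := hu.dist_le_mul a ha b hb
    _ = ↑(2 * M * K) * dist a b := by push_cast; ring

theorem IsCompact.exists_pos_forall_norm_lt_imp_infDist_lt {X F : Type*} [PseudoMetricSpace X]
    [NormedAddCommGroup F] {g : X → F} {K : Set X} (hK : IsCompact K) (hg : Continuous g)
    {ε : ℝ} (hε : 0 < ε) : ∃ δ > 0, ∀ y ∈ K, ‖g y‖ < δ → infDist y {z | g z = 0} < ε := by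
  set A := K ∩ {y | ε ≤ infDist y {z | g z = 0}}
  have hA : IsCompact A := hK.inter_right (isClosed_le continuous_const (continuous_infDist_pt _))
  have hgA : ∀ y ∈ A, 0 < ‖g y‖ := fun y hy => norm_pos_iff.2 fun hy0 =>
    hε.not_ge (hy.2.trans_eq (infDist_zero_of_mem (s := {z | g z = 0}) hy0))
  obtain ⟨δ, hδ, hδA⟩ := hA.exists_forall_le' hg.norm.continuousOn hgA
  exact ⟨δ, hδ, fun y hy hgy => not_le.1 fun hεy => (hδA y ⟨hy, hεy⟩).not_gt hgy⟩

theorem tendsto_infDist_zero_of_tendsto_zero {ι X F : Type*} [PseudoMetricSpace X]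
    [NormedAddCommGroup F] {g : X → F} {K : Set X} {l : Filter ι} {y : ι → X}
    (hK : IsCompact K) (hg : Continuous g) (hyK : ∀ᶠ i in l, y i ∈ K)
    (hgy : Tendsto (fun i => g (y i)) l (𝓝 0)) :
    Tendsto (fun i => infDist (y i) {z | g z = 0}) l (𝓝 0) := by
  refine tendsto_order.2 ⟨fun b hb => .of_forall fun i => hb.trans_le infDist_nonneg,
    fun ε hε => ?_⟩
  obtain ⟨δ, hδ, hδK⟩ := hK.exists_pos_forall_norm_lt_imp_infDist_lt hg hε
  filter_upwards [hyK, (tendsto_zero_iff_norm_tendsto_zero.1 hgy).eventually_lt_const hδ]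
    with i hi hgi using hδK _ hi hgi

section GradientFlow

variable {E : Type*} [NormedAddCommGroup E] [InnerProductSpace ℝ E] [CompleteSpace E]

def IsGradientFlowOn (f : E → ℝ) (x : ℝ → E) (s : Set ℝ) : Prop :=
  ∀ t ∈ s, HasDerivAt x (-gradient f (x t)) t

variable {f : E → ℝ} {x : ℝ → E} {s : Set ℝ}

namespace IsGradientFlowOn

theorem hasDerivAt_comp (hx : IsGradientFlowOn f x s) {t : ℝ} (ht : t ∈ s)
    (hf : DifferentiableAt ℝ f (x t)) :
    HasDerivAt (fun s => f (x s)) (-‖gradient f (x t)‖ ^ 2) t := by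
  have := hf.hasGradientAt.hasFDerivAt.comp_hasDerivAt t (hx t ht)
  rwa [InnerProductSpace.toDual_apply_apply, inner_neg_right, real_inner_self_eq_norm_sq] at this

theorem antitoneOn_comp (hx : IsGradientFlowOn f x s) (hs : Convex ℝ s)
    (hf : Differentiable ℝ f) : AntitoneOn (fun t => f (x t)) s :=
  antitoneOn_of_hasDerivWithinAt_nonpos hs
    (fun _ ht => (hx.hasDerivAt_comp ht (hf _)).continuousAt.continuousWithinAt)
    (fun _ ht => (hx.hasDerivAt_comp (interior_subset ht) (hf _)).hasDerivWithinAt)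
    (fun _ _ => neg_nonpos.2 (sq_nonneg _))

theorem tendsto_gradient_zero {K : ℝ≥0} {a m C : ℝ} (hx : IsGradientFlowOn f x (Ici a))
    (hf : Differentiable ℝ f) (hg : LipschitzWith K (gradient f))
    (hm : ∀ t ∈ Ici a, m ≤ f (x t)) (hC : ∀ t ∈ Ici a, ‖x t‖ ≤ C) :
    Tendsto (fun t => gradient f (x t)) atTop (𝓝 0) := by
  set M : ℝ≥0 := ‖gradient f 0‖₊ + K * C.toNNReal
  have hM : ∀ t ∈ Ici a, ‖gradient f (x t)‖ ≤ M := fun t ht =>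
    calc ‖gradient f (x t)‖ ≤ ‖gradient f 0‖ + ‖gradient f (x t) - gradient f 0‖ :=
          norm_le_insert' _ _
      _ ≤ ‖gradient f 0‖ + K * ‖x t‖ := by
          gcongr
          simpa [dist_eq_norm] using hg.dist_le_mul (x t) 0
      _ ≤ M := by
          push_cast [M]
          gcongr
          exact (hC t ht).trans (Real.le_coe_toNNReal C)
  have hxlip : LipschitzOnWith M x (Ici a) :=
    (convex_Ici a).lipschitzOnWith_of_nnnorm_hasDerivWithin_le
      (fun t ht => (hx t ht).hasDerivWithinAt)
      (fun t ht => by rw [nnnorm_neg, ← NNReal.coe_le_coe, coe_nnnorm]; exact hM t ht)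
  have huc : UniformContinuousOn (fun t => -‖gradient f (x t)‖ ^ 2) (Ici a) :=
    _root_.uniformContinuous_neg.comp_uniformContinuousOn
      ((hg.comp_lipschitzOnWith hxlip).norm_sq hM).uniformContinuousOn
  obtain ⟨l, hl⟩ :=
    AntitoneOn.exists_tendsto_atTop_of_forall_le (hx.antitoneOn_comp (convex_Ici a) hf) hm
  have hsq := tendsto_zero_of_hasDerivAt_of_uniformContinuousOn
    (fun t ht => hx.hasDerivAt_comp ht (hf _)) hl huc
  rw [tendsto_zero_iff_norm_tendsto_zero]
  simpa using hsq.neg.sqrt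

end IsGradientFlowOn

end GradientFlow

/-- Gradient flow facts: along a bounded solution of `ẋ = −∇f(x)` with `f` `C¹`,
bounded below, and with Lipschitz gradient, `f(x(t))` is nonincreasing with derivative
`−‖∇f(x(t))‖²`, `∇f(x(t)) → 0`, and the distance of `x(t)` to the set of stationary
points tends to `0`. -/
theorem gradient_flow_convergence
    {d : ℕ} (f : EuclideanSpace ℝ (Fin d) → ℝ) (L fstar : ℝ)
    (hf : ContDiff ℝ 1 f)
    (hlip : ∀ a b : EuclideanSpace ℝ (Fin d), ‖gradient f a - gradient f b‖ ≤ L * ‖a - b‖)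
    (hbelow : ∀ y, fstar ≤ f y)
    (x : ℝ → EuclideanSpace ℝ (Fin d))
    (hode : ∀ t : ℝ, 0 ≤ t → HasDerivAt x (-gradient f (x t)) t)
    (htraj : ∃ C : ℝ, ∀ t : ℝ, 0 ≤ t → ‖x t‖ ≤ C) :
    AntitoneOn (fun t => f (x t)) (Set.Ici 0) ∧
    (∀ t : ℝ, 0 ≤ t → HasDerivAt (fun s => f (x s)) (-‖gradient f (x t)‖ ^ 2) t) ∧
    Tendsto (fun t => gradient f (x t)) atTop (𝓝 0) ∧
    Tendsto (fun t => Metric.infDist (x t) {y | gradient f y = 0}) atTop (𝓝 0) := by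
  obtain ⟨C, hC⟩ := htraj
  have hflow : IsGradientFlowOn f x (Ici 0) := hode
  have hdiff : Differentiable ℝ f := hf.differentiable one_ne_zero
  have hg : LipschitzWith (Real.toNNReal L) (gradient f) :=
    .of_dist_le' fun a b => by simpa only [dist_eq_norm] using hlip a b
  have hgrad : Tendsto (fun t => gradient f (x t)) atTop (𝓝 0) :=
    hflow.tendsto_gradient_zero hdiff hg (fun t _ => hbelow (x t)) hC
  refine ⟨hflow.antitoneOn_comp (convex_Ici 0) hdiff,
    fun t ht => hflow.hasDerivAt_comp ht (hdiff _), hgrad, ?_⟩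
  refine tendsto_infDist_zero_of_tendsto_zero (isCompact_closedBall 0 C) hg.continuous ?_ hgrad
  filter_upwards [eventually_ge_atTop 0] with t ht
  exact mem_closedBall_zero_iff.2 (hC t ht)
end

section
/- Let d ≥ 1 and let f : ℝ^d → ℝ be three times continuously differentiable with |∂³_{ijk}f(x)| ≤ B₁ for all indices i, j, k and all x; set c₂″ = B₁d⁴/3. For δ > 0 define the balanced smoothed gradient ∇f_δ(x) = (1/(2δ))·E_u[(f(x + δu) − f(x − δu))·(d+1)u/(1+‖u‖²)], where u is distributed with the unit-scale truncated Cauchy density h. Then for every x ∈ ℝ^d, ‖∇f_δ(x)‖ ≤ c₁₁‖∇f(x)‖ + d·c₂″·δ², and consequently ‖∇f_δ(x)‖² ≤ 2c₁₁²‖∇f(x)‖² + 2d²δ⁴c₂″², where c₁₁ = 2Γ((d+1)/2)/(√π·Γ(d/2)·c₁). -/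
/-!
Expanding `v` in the standard basis turns the entrywise bound into `|D³f(v, v, v)| ≤ B₁ d³ ‖v‖³`,
and Taylor expansion of `t ↦ f (x + t • v)` with Lagrange remainders then gives
`|f (x + v) - f (x - v)| ≤ 2 ‖∇f x‖ ‖v‖ + B₁ d³ ‖v‖³ / 3`.
With `v = δ u` and `‖u‖ ≤ 1`, the weight satisfies `(d + 1) ‖u‖² / (1 + ‖u‖²) ≤ (d + 1) / 2`, so
averaging against the probability density `h` gives
`‖∇f_δ x‖ ≤ (d + 1) / 2 ‖∇f x‖ + (d + 1) B₁ d³ δ² / 12`.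
Finally `h` is bounded by its value at the origin on the unit ball, so `1 = ∫ h` is at most that
value times the volume of the ball, which unwinds to `(d + 1) / 2 ≤ d ≤ c₁₁`.
-/

open MeasureTheory Real Filter Topology ProbabilityTheory

section Taylor

open Set Finset

theorem taylorWithinEval_uIcc {g : ℝ → ℝ} {n : ℕ} (hg : ContDiff ℝ n g) {x₀ x : ℝ}
    (hx : x₀ ≠ x) :
    taylorWithinEval g n (uIcc x₀ x) x₀ x =
      ∑ k ∈ range (n + 1), ((k.factorial : ℝ)⁻¹ * (x - x₀) ^ k) • iteratedDeriv k g x₀ := by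
  rw [taylor_within_apply]
  refine sum_congr rfl fun k hk => ?_
  rw [iteratedDerivWithin_eq_iteratedDeriv (uniqueDiffOn_uIcc hx)
    (hg.contDiffAt.of_le (by exact_mod_cast Nat.lt_succ_iff.mp (mem_range.mp hk)))
    left_mem_uIcc]

/-- The even-order terms cancel in the central difference, so only the two Lagrange remainders
`g'''(ξ)/6` and `g'''(η)/6` survive. -/
theorem abs_sub_sub_two_mul_deriv_le {g : ℝ → ℝ} (hg : ContDiff ℝ 3 g) {A : ℝ}
    (hA : ∀ t, |iteratedDeriv 3 g t| ≤ A) :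
    |g 1 - g (-1) - 2 * deriv g 0| ≤ A / 3 := by
  obtain ⟨ξ, -, hξ⟩ := taylor_mean_remainder_lagrange_iteratedDeriv (n := 2) (x₀ := 0) (x := 1)
    zero_ne_one hg.contDiffOn
  obtain ⟨η, -, hη⟩ := taylor_mean_remainder_lagrange_iteratedDeriv (n := 2) (x₀ := 0) (x := -1)
    (by norm_num) hg.contDiffOn
  rw [taylorWithinEval_uIcc hg.of_succ (by norm_num)] at hξ hη
  simp only [Nat.reduceAdd, sub_zero, one_pow, mul_one, smul_eq_mul, sum_range_succ, range_one,
    sum_singleton, Nat.factorial, Nat.cast_one, inv_one, iteratedDeriv_zero, one_mul,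
    Nat.succ_eq_add_one, zero_add, iteratedDeriv_one, Nat.cast_ofNat, Nat.reduceMul, pow_zero,
    pow_one, mul_neg, neg_mul, even_two, Even.neg_pow] at hξ hη
  have hAξ := abs_le.mp (hA ξ)
  have hAη := abs_le.mp (hA η)
  rw [abs_le]
  constructor <;> linarith

variable {E F : Type*} [NormedAddCommGroup E] [NormedSpace ℝ E]
  [NormedAddCommGroup F] [NormedSpace ℝ F]

theorem iteratedDeriv_comp_add_smul {f : E → F} {k : WithTop ℕ∞} (hf : ContDiff ℝ k f) {n : ℕ}
    (hn : n ≤ k) (x v : E) (t : ℝ) :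
    iteratedDeriv n (fun s : ℝ => f (x + s • v)) t =
      iteratedFDeriv ℝ n f (x + t • v) (fun _ => v) := by
  have hcomp := (ContinuousLinearMap.smulRight (1 : ℝ →L[ℝ] ℝ) v).iteratedFDeriv_comp_right
    (f := fun y => f (x + y)) (hf.comp (contDiff_const.add contDiff_id)) t hn
  rw [iteratedDeriv_eq_iteratedFDeriv]
  simp only [Function.comp_def, ContinuousLinearMap.smulRight_apply, one_apply_eq_self,
    iteratedFDeriv_comp_add_left] at hcomp
  simp only [hcomp, ContinuousMultilinearMap.compContinuousLinearMap_apply,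
    ContinuousLinearMap.smulRight_apply, one_apply_eq_self, one_smul]

theorem abs_sub_sub_two_mul_fderiv_le {f : E → ℝ} (hf : ContDiff ℝ 3 f) (x v : E) {A : ℝ}
    (hA : ∀ y, |iteratedFDeriv ℝ 3 f y (fun _ => v)| ≤ A) :
    |f (x + v) - f (x - v) - 2 * fderiv ℝ f x v| ≤ A / 3 := by
  have hline : ContDiff ℝ 3 fun t : ℝ => f (x + t • v) := by fun_prop
  have hderiv : deriv (fun t : ℝ => f (x + t • v)) 0 = fderiv ℝ f x v := by
    rw [← iteratedDeriv_one, iteratedDeriv_comp_add_smul hf (by norm_num)]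
    simp
  have h := abs_sub_sub_two_mul_deriv_le hline fun t => by
    rw [iteratedDeriv_comp_add_smul hf le_rfl]
    exact hA _
  simpa [hderiv, sub_eq_add_neg] using h

end Taylor

section Multilinear

variable {ι : Type*} [Fintype ι] [DecidableEq ι]

theorem abs_apply_diag_le_of_abs_apply_single_le {n : ℕ}
    (T : ContinuousMultilinearMap ℝ (fun _ : Fin n => EuclideanSpace ℝ ι) ℝ) {B : ℝ}
    (hT : ∀ r : Fin n → ι, |T (fun l => EuclideanSpace.single (r l) 1)| ≤ B)
    (v : EuclideanSpace ℝ ι) :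
    |T (fun _ => v)| ≤ B * Fintype.card ι ^ n * ‖v‖ ^ n := by
  have hexpand : T (fun _ => v) =
      ∑ r : Fin n → ι, (∏ l, v (r l)) * T (fun l => EuclideanSpace.single (r l) 1) := by
    conv_lhs => rw [← (EuclideanSpace.basisFun ι ℝ).sum_repr v]
    simp [T.map_sum, T.map_smul_univ]
  have hterm : ∀ r : Fin n → ι,
      |(∏ l, v (r l)) * T (fun l => EuclideanSpace.single (r l) 1)| ≤ ‖v‖ ^ n * B := by
    intro r
    rw [abs_mul, Finset.abs_prod]
    have hprod : ∏ l, |v (r l)| ≤ ‖v‖ ^ n := by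
      simpa using Finset.prod_le_prod (s := Finset.univ) (fun l _ => abs_nonneg (v (r l)))
        (fun l _ => (Real.norm_eq_abs (v (r l))).symm.le.trans (PiLp.norm_apply_le v (r l)))
    exact mul_le_mul hprod (hT r) (abs_nonneg _) (by positivity)
  calc |T (fun _ => v)| ≤ ∑ r : Fin n → ι, ‖v‖ ^ n * B :=
        hexpand ▸ (Finset.abs_sum_le_sum_abs _ _).trans (Finset.sum_le_sum fun r _ => hterm r)
    _ = B * Fintype.card ι ^ n * ‖v‖ ^ n := by
      simp only [Finset.sum_const, Finset.card_univ, Fintype.card_pi, Finset.prod_const,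
        Fintype.card_fin, nsmul_eq_mul, Nat.cast_pow]
      ring

end Multilinear

section TruncCauchy

variable {d : ℕ} {c₁ : ℝ}

theorem truncCauchy_one_le_indicator (hc₁ : 0 < c₁) (u : EuclideanSpace ℝ (Fin d)) :
    truncCauchy d c₁ 1 u ≤ (Metric.closedBall 0 1).indicator
      (fun _ => Gamma ((d + 1) / 2) / (π ^ (((d : ℝ) + 1) / 2) * c₁)) u := by
  have hΓ : 0 < Gamma ((d + 1) / 2) := Gamma_pos_of_pos (by positivity)
  unfold truncCauchy
  split_ifs with hu
  · rw [Set.indicator_of_mem (by simpa using hu), one_pow, one_pow, mul_one, div_one]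
    refine mul_le_of_le_one_right (by positivity) ?_
    exact rpow_le_one_of_one_le_of_nonpos (by simp) (neg_nonpos.mpr (by positivity))
  · exact Set.indicator_nonneg (fun _ _ => by positivity) u

theorem truncCauchy_one_nonneg (hc₁ : 0 < c₁) (u : EuclideanSpace ℝ (Fin d)) :
    0 ≤ truncCauchy d c₁ 1 u := by
  have hΓ : 0 < Gamma ((d + 1) / 2) := Gamma_pos_of_pos (by positivity)
  unfold truncCauchy
  split_ifs <;> positivity

theorem integrable_indicator_closedBall_const (c : ℝ) :
    Integrable ((Metric.closedBall (0 : EuclideanSpace ℝ (Fin d)) 1).indicator fun _ => c) :=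
  (integrable_indicator_iff Metric.isClosed_closedBall.measurableSet).mpr
    (integrableOn_const measure_closedBall_lt_top.ne)

theorem integrable_truncCauchy_one (hc₁ : 0 < c₁) : Integrable (truncCauchy d c₁ 1) := by
  have hmeas : Measurable (truncCauchy d c₁ 1) := by
    unfold truncCauchy
    refine Measurable.ite (measurableSet_le measurable_norm measurable_const) ?_ measurable_const
    exact measurable_const.mul (by fun_prop)
  refine (integrable_indicator_closedBall_const
    (Gamma ((d + 1) / 2) / (π ^ (((d : ℝ) + 1) / 2) * c₁))).mono' hmeas.aestronglyMeasurable ?_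
  filter_upwards with u
  rw [Real.norm_eq_abs, abs_of_nonneg (truncCauchy_one_nonneg hc₁ u)]
  exact truncCauchy_one_le_indicator hc₁ u

theorem integral_truncCauchy_one_le (hd : 0 < d) (hc₁ : 0 < c₁) :
    ∫ u, truncCauchy d c₁ 1 u ≤
      2 * Gamma ((d + 1) / 2) / (d * (√π * Gamma (d / 2) * c₁)) := by
  have : Nonempty (Fin d) := ⟨⟨0, hd⟩⟩
  have hΓ : 0 < Gamma (d / 2) := Gamma_pos_of_pos (by positivity)
  have hπ : π ^ (((d : ℝ) + 1) / 2) = √π ^ d * √π := by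
    rw [sqrt_eq_rpow, ← rpow_natCast, ← rpow_mul pi_pos.le, ← rpow_add pi_pos]
    ring_nf
  have hvol : volume.real (Metric.closedBall (0 : EuclideanSpace ℝ (Fin d)) 1) =
      √π ^ d / (d / 2 * Gamma (d / 2)) := by
    rw [measureReal_def, EuclideanSpace.volume_closedBall, Fintype.card_fin,
      Gamma_add_one (by positivity), ENNReal.ofReal_one, one_pow, one_mul,
      ENNReal.toReal_ofReal (by positivity)]
  calc ∫ u, truncCauchy d c₁ 1 u
      ≤ ∫ u, (Metric.closedBall 0 1).indicator
          (fun _ => Gamma ((d + 1) / 2) / (π ^ (((d : ℝ) + 1) / 2) * c₁)) u :=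
        integral_mono (integrable_truncCauchy_one hc₁) (integrable_indicator_closedBall_const _)
          (truncCauchy_one_le_indicator hc₁)
    _ = 2 * Gamma ((d + 1) / 2) / (d * (√π * Gamma (d / 2) * c₁)) := by
      rw [integral_indicator Metric.isClosed_closedBall.measurableSet, setIntegral_const, hvol,
        smul_eq_mul, hπ]
      field_simp

end TruncCauchy

section CentralDifference

variable {E : Type*} [NormedAddCommGroup E] [InnerProductSpace ℝ E] [CompleteSpace E]
  {f : E → ℝ} {K : ℝ}

theorem abs_centralDifference_le (hf : ContDiff ℝ 3 f)
    (hK : ∀ y v, |iteratedFDeriv ℝ 3 f y (fun _ => v)| ≤ K * ‖v‖ ^ 3) (x v : E) :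
    |f (x + v) - f (x - v)| ≤ 2 * ‖gradient f x‖ * ‖v‖ + K / 3 * ‖v‖ ^ 3 := by
  have htaylor := abs_le.mp (abs_sub_sub_two_mul_fderiv_le hf x v (hK · v))
  have hgrad : |fderiv ℝ f x v| ≤ ‖gradient f x‖ * ‖v‖ := by
    rw [← inner_gradient_left]
    exact abs_real_inner_le_norm _ _
  have hgrad' := abs_le.mp hgrad
  rw [abs_le]
  constructor <;> linarith

/-- With `a = d + 1`, `a u / (1 + ‖u‖²)` is the score `-∇ log h(u)` of the Cauchy density. -/
theorem abs_centralDifference_mul_cauchyWeight_le (hf : ContDiff ℝ 3 f) (hK₀ : 0 ≤ K)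
    (hK : ∀ y v, |iteratedFDeriv ℝ 3 f y (fun _ => v)| ≤ K * ‖v‖ ^ 3) (x : E) {δ a : ℝ}
    (hδ : 0 < δ) (ha : 0 ≤ a) {u : E} (hu : ‖u‖ ≤ 1) :
    |(f (x + δ • u) - f (x - δ • u)) * (a / (1 + ‖u‖ ^ 2))| * ‖u‖ ≤
      a / 2 * (2 * δ * ‖gradient f x‖ + K / 3 * δ ^ 3) := by
  set M := 2 * δ * ‖gradient f x‖ + K / 3 * δ ^ 3
  have hnorm : ‖δ • u‖ = δ * ‖u‖ := by rw [norm_smul, norm_of_nonneg hδ.le]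
  have hdiff : |f (x + δ • u) - f (x - δ • u)| ≤ M * ‖u‖ := by
    have hcube : ‖u‖ ^ 3 ≤ ‖u‖ := by
      nlinarith [norm_nonneg u, mul_le_mul hu hu (norm_nonneg u) zero_le_one]
    calc |f (x + δ • u) - f (x - δ • u)|
        ≤ 2 * ‖gradient f x‖ * (δ * ‖u‖) + K / 3 * (δ * ‖u‖) ^ 3 :=
          hnorm ▸ abs_centralDifference_le hf hK x (δ • u)
      _ = 2 * ‖gradient f x‖ * (δ * ‖u‖) + K / 3 * δ ^ 3 * ‖u‖ ^ 3 := by ring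
      _ ≤ 2 * ‖gradient f x‖ * (δ * ‖u‖) + K / 3 * δ ^ 3 * ‖u‖ := by gcongr
      _ = M * ‖u‖ := by ring
  have hweight : ‖u‖ ^ 2 / (1 + ‖u‖ ^ 2) ≤ 1 / 2 := by
    rw [div_le_div_iff₀ (by positivity) two_pos]
    nlinarith [mul_le_mul hu hu (norm_nonneg u) zero_le_one]
  have hM : 0 ≤ M := by positivity
  calc |(f (x + δ • u) - f (x - δ • u)) * (a / (1 + ‖u‖ ^ 2))| * ‖u‖
      = |f (x + δ • u) - f (x - δ • u)| * ‖u‖ * (a / (1 + ‖u‖ ^ 2)) := by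
        rw [abs_mul, abs_of_nonneg (by positivity : 0 ≤ a / (1 + ‖u‖ ^ 2))]
        ring
    _ ≤ M * ‖u‖ * ‖u‖ * (a / (1 + ‖u‖ ^ 2)) := by gcongr
    _ = a * M * (‖u‖ ^ 2 / (1 + ‖u‖ ^ 2)) := by ring
    _ ≤ a * M * (1 / 2) := by gcongr
    _ = a / 2 * M := by ring

end CentralDifference

theorem norm_integral_truncCauchy_smul_le {d : ℕ} {c₁ : ℝ} (hc₁ : 0 < c₁)
    (hnorm : ∫ u : EuclideanSpace ℝ (Fin d), truncCauchy d c₁ 1 u = 1)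
    {φ : EuclideanSpace ℝ (Fin d) → ℝ} {C : ℝ} (hφ : ∀ u, ‖u‖ ≤ 1 → |φ u| * ‖u‖ ≤ C) :
    ‖∫ u, (truncCauchy d c₁ 1 u * φ u) • u‖ ≤ C := by
  have hpointwise : ∀ u, ‖(truncCauchy d c₁ 1 u * φ u) • u‖ ≤ C * truncCauchy d c₁ 1 u := by
    intro u
    by_cases hu : ‖u‖ ≤ 1
    · rw [norm_smul, norm_mul, norm_of_nonneg (truncCauchy_one_nonneg hc₁ u), mul_assoc,
        mul_comm C, Real.norm_eq_abs]
      exact mul_le_mul_of_nonneg_left (hφ u hu) (truncCauchy_one_nonneg hc₁ u)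
    · simp [truncCauchy, hu]
  calc ‖∫ u, (truncCauchy d c₁ 1 u * φ u) • u‖
      ≤ ∫ u, C * truncCauchy d c₁ 1 u :=
        norm_integral_le_of_norm_le ((integrable_truncCauchy_one hc₁).const_mul C)
          (.of_forall hpointwise)
    _ = C := by rw [integral_const_mul, hnorm, mul_one]

theorem natCast_le_of_integral_truncCauchy_eq_one {d : ℕ} (hd : 0 < d) {c₁ : ℝ} (hc₁ : 0 < c₁)
    (hnorm : ∫ u : EuclideanSpace ℝ (Fin d), truncCauchy d c₁ 1 u = 1) :
    (d : ℝ) ≤ 2 * Gamma ((d + 1) / 2) / (√π * Gamma (d / 2) * c₁) := by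
  have hΓ : 0 < Gamma (d / 2) := Gamma_pos_of_pos (by positivity)
  have h := hnorm ▸ integral_truncCauchy_one_le hd hc₁
  rw [le_div_iff₀ (by positivity), one_mul, ← le_div_iff₀' (by positivity)] at h
  rwa [le_div_iff₀ (by positivity), ← le_div_iff₀' (by positivity)]

/-- Bounds on the balanced smoothed gradient:
`‖∇f_δ(x)‖ ≤ c₁₁‖∇f(x)‖ + d·c₂″·δ²` and
`‖∇f_δ(x)‖² ≤ 2c₁₁²‖∇f(x)‖² + 2d²δ⁴c₂″²`, with `c₂″ = B₁d⁴/3`. -/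
theorem balanced_smoothed_gradient_bound
    (d : ℕ) (hd : 0 < d) (c₁ : ℝ) (hc₁ : 0 < c₁)
    (hnorm : ∫ u : EuclideanSpace ℝ (Fin d), truncCauchy d c₁ 1 u = 1)
    (f : EuclideanSpace ℝ (Fin d) → ℝ) (B₁ : ℝ)
    (hf : ContDiff ℝ 3 f)
    (h3 : ∀ (y : EuclideanSpace ℝ (Fin d)) (i j k : Fin d),
      |iteratedFDeriv ℝ 3 f y
        ![EuclideanSpace.single i 1, EuclideanSpace.single j 1, EuclideanSpace.single k 1]| ≤ B₁)
    (c₁₁ c₂'' : ℝ)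
    (hc₁₁ : c₁₁ = 2 * Real.Gamma (((d : ℝ) + 1) / 2) /
      (Real.sqrt Real.pi * Real.Gamma ((d : ℝ) / 2) * c₁))
    (hc₂'' : c₂'' = B₁ * (d : ℝ) ^ 4 / 3)
    (δ : ℝ) (hδ : 0 < δ) (x : EuclideanSpace ℝ (Fin d))
    (gradfδ : EuclideanSpace ℝ (Fin d))
    (hgradfδ : gradfδ = (2 * δ)⁻¹ • ∫ u : EuclideanSpace ℝ (Fin d),
      (truncCauchy d c₁ 1 u *
        ((f (x + δ • u) - f (x - δ • u)) * (((d : ℝ) + 1) / (1 + ‖u‖ ^ 2)))) • u) :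
    ‖gradfδ‖ ≤ c₁₁ * ‖gradient f x‖ + (d : ℝ) * c₂'' * δ ^ 2 ∧
    ‖gradfδ‖ ^ 2 ≤ 2 * c₁₁ ^ 2 * ‖gradient f x‖ ^ 2 + 2 * (d : ℝ) ^ 2 * δ ^ 4 * c₂'' ^ 2 := by
  have hd₁ : (1 : ℝ) ≤ d := by exact_mod_cast hd
  have hB₁ : 0 ≤ B₁ := (abs_nonneg _).trans (h3 x ⟨0, hd⟩ ⟨0, hd⟩ ⟨0, hd⟩)
  have hc₁₁d : (d : ℝ) ≤ c₁₁ := hc₁₁ ▸ natCast_le_of_integral_truncCauchy_eq_one hd hc₁ hnorm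
  have hK : ∀ y v, |iteratedFDeriv ℝ 3 f y (fun _ => v)| ≤ B₁ * d ^ 3 * ‖v‖ ^ 3 := by
    intro y v
    simpa using abs_apply_diag_le_of_abs_apply_single_le _ (fun r => by
      convert h3 y (r 0) (r 1) (r 2) using 3
      funext l; fin_cases l <;> rfl) v
  have hbound := norm_integral_truncCauchy_smul_le hc₁ hnorm fun u hu =>
    abs_centralDifference_mul_cauchyWeight_le hf (by positivity) hK x hδ (a := d + 1)
      (by positivity) hu
  have hfirst : ‖gradfδ‖ ≤ c₁₁ * ‖gradient f x‖ + d * c₂'' * δ ^ 2 := by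
    rw [hgradfδ, norm_smul, norm_inv, norm_of_nonneg (by positivity), hc₂'']
    calc (2 * δ)⁻¹ * ‖_‖
        ≤ (2 * δ)⁻¹ * ((d + 1) / 2 * (2 * δ * ‖gradient f x‖ + B₁ * d ^ 3 / 3 * δ ^ 3)) := by
          gcongr
      _ = (d + 1) / 2 * ‖gradient f x‖ + (d + 1) / 4 * (B₁ * d ^ 3 / 3 * δ ^ 2) := by
          field_simp
          ring
      _ ≤ c₁₁ * ‖gradient f x‖ + d ^ 2 * (B₁ * d ^ 3 / 3 * δ ^ 2) := by
          gcongr ?_ * _ + ?_ * _ <;> nlinarith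
      _ = c₁₁ * ‖gradient f x‖ + d * (B₁ * d ^ 4 / 3) * δ ^ 2 := by ring
  refine ⟨hfirst, ?_⟩
  calc ‖gradfδ‖ ^ 2 ≤ (c₁₁ * ‖gradient f x‖ + d * c₂'' * δ ^ 2) ^ 2 := by gcongr
    _ ≤ 2 * ((c₁₁ * ‖gradient f x‖) ^ 2 + (d * c₂'' * δ ^ 2) ^ 2) := add_sq_le
    _ = _ := by ring
end
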